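/- For the function f(x,u,p,q,r) = 6qr/p − 6q³/p², at every point (x,u,p,q,r) ∈ ℝ⁵ with p ≠ 0 the Cartan invariants satisfy I₀ = −6q/p, I₃ = 1/(2p), I₄ = 0, and, with the branch formulas for I₄ = 0: I₅ = 0, I₆ = 6/(25p²) (in particular I₆ ≠ 0), I₈ = 0, and I₉ = 0. -/

import Mathlib

/-!
Away from the pole `p = 0`, each of `f`, `I₀`, `I₁`, `I₂`, `I₃` is a function of `(p, q, r)` alone,
polynomial in `q, r` with coefficients `a / p + b / p²`. Hence `D̂ₓ` loses its `x`- and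
`u`-terms and every partial derivative becomes a one-variable derivative of such an expression.
Computing in turn `I₀ = -6q/p`, `I₁ = 8q²/p² + r/p`, `I₂ = 15q²/p² - 3r/p` and `I₃ = 1/(2p)`,
the branch invariants `I₄, I₅, I₆, I₈, I₉` follow by substitution and field arithmetic.
-/

noncomputable section

/-- Functions of the five jet variables `(x, u, p, q, r)`. -/
abbrev Jet5 := ℝ → ℝ → ℝ → ℝ → ℝ → ℝ

/-- Partial derivative `F_x`. -/
def pX (F : Jet5) (x u p q r : ℝ) : ℝ := deriv (fun t => F t u p q r) x
/-- Partial derivative `F_u`. -/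
def pU (F : Jet5) (x u p q r : ℝ) : ℝ := deriv (fun t => F x t p q r) u
/-- Partial derivative `F_p`. -/
def pP (F : Jet5) (x u p q r : ℝ) : ℝ := deriv (fun t => F x u t q r) p
/-- Partial derivative `F_q`. -/
def pQ (F : Jet5) (x u p q r : ℝ) : ℝ := deriv (fun t => F x u p t r) q
/-- Partial derivative `F_r`. -/
def pR (F : Jet5) (x u p q r : ℝ) : ℝ := deriv (fun t => F x u p q t) r

/-- Total derivative operator `D̂ₓF = F_x + p F_u + q F_p + r F_q + f F_r`. -/
def Dhat (f F : Jet5) : Jet5 := fun x u p q r =>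
  pX F x u p q r + p * pU F x u p q r + q * pP F x u p q r + r * pQ F x u p q r
    + f x u p q r * pR F x u p q r

/-- Cartan invariant `I₀ = −f_r`. -/
def I0 (f : Jet5) : Jet5 := fun x u p q r => - pR f x u p q r

/-- Cartan invariant `I₁ = (1/4)I₀² − (1/6)D̂ₓI₀`. -/
def I1 (f : Jet5) : Jet5 := fun x u p q r =>
  (1 / 4) * (I0 f x u p q r) ^ 2 - (1 / 6) * Dhat f (I0 f) x u p q r

/-- Cartan invariant `I₂ = −(1/2)D̂ₓI₀ − f_q`. -/
def I2 (f : Jet5) : Jet5 := fun x u p q r =>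
  -(1 / 2) * Dhat f (I0 f) x u p q r - pQ f x u p q r

/-- Cartan invariant `I₃ = −(1/8)(I₀)_r·I₀ + (1/4)(I₁)_r − (1/12)(I₂)_r`. -/
def I3 (f : Jet5) : Jet5 := fun x u p q r =>
  -(1 / 8) * pR (I0 f) x u p q r * I0 f x u p q r
    + (1 / 4) * pR (I1 f) x u p q r - (1 / 12) * pR (I2 f) x u p q r

/-- Cartan invariant `I₄ = −(1/6)(I₀)_r`. -/
def I4 (f : Jet5) : Jet5 := fun x u p q r => -(1 / 6) * pR (I0 f) x u p q r

/-- Cartan invariant on the branch `I₄ ≠ 0`: `I₅ = −(1/2)(I₄)_r/I₄²`. -/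
def I5 (f : Jet5) : Jet5 := fun x u p q r =>
  -(1 / 2) * pR (I4 f) x u p q r / (I4 f x u p q r) ^ 2

/-- Cartan invariant on the branch `I₄ ≠ 0`: `I₆ = −(3/2)I₀·I₄ − (I₂)_r − 6I₃`. -/
def I6 (f : Jet5) : Jet5 := fun x u p q r =>
  -(3 / 2) * I0 f x u p q r * I4 f x u p q r - pR (I2 f) x u p q r - 6 * I3 f x u p q r

/-- Cartan invariant on the branch `I₄ ≠ 0`:
`I₈ = (I₆/I₄²)(D̂ₓI₄ − (I₄)_r f) − (1/I₄)D̂ₓI₆ + (3/4)I₀² − (1/2)I₀I₆/I₄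
      + (3/10)I₂ + (1/3)I₆²/I₄² − (27/10)I₁`. -/
def I8 (f : Jet5) : Jet5 := fun x u p q r =>
  (I6 f x u p q r / (I4 f x u p q r) ^ 2)
      * (Dhat f (I4 f) x u p q r - pR (I4 f) x u p q r * f x u p q r)
    - (1 / I4 f x u p q r) * Dhat f (I6 f) x u p q r
    + (3 / 4) * (I0 f x u p q r) ^ 2
    - (1 / 2) * I0 f x u p q r * I6 f x u p q r / I4 f x u p q r
    + (3 / 10) * I2 f x u p q r
    + (1 / 3) * (I6 f x u p q r) ^ 2 / (I4 f x u p q r) ^ 2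
    - (27 / 10) * I1 f x u p q r

/-- On the branch `I₄ = 0`: `I₅ = −(18/5)I₀I₃ − (3/5)(I₀)_p + (2/5)∂_q(I₂ − 3I₁)`. -/
def I5z (f : Jet5) : Jet5 := fun x u p q r =>
  -(18 / 5) * I0 f x u p q r * I3 f x u p q r - (3 / 5) * pP (I0 f) x u p q r
    + (2 / 5) * pQ (fun x u p q r => I2 f x u p q r - 3 * I1 f x u p q r) x u p q r

/-- On the branch `I₄ = 0`: `I₆ = −(36/25)I₃² − (3/5)I₀(I₃)_q − (6/5)(I₃)_p`. -/
def I6z (f : Jet5) : Jet5 := fun x u p q r =>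
  -(36 / 25) * (I3 f x u p q r) ^ 2 - (3 / 5) * I0 f x u p q r * pQ (I3 f) x u p q r
    - (6 / 5) * pP (I3 f) x u p q r

/-- On the branch `I₄ = 0`:
`I₈ = (7/8)I₀³ − (D̂ₓI₂ − (I₂)_r f) − f_p + 6fI₃ + I₀(−3I₁ − (1/2)I₂)`. -/
def I8z (f : Jet5) : Jet5 := fun x u p q r =>
  (7 / 8) * (I0 f x u p q r) ^ 3
    - (Dhat f (I2 f) x u p q r - pR (I2 f) x u p q r * f x u p q r)
    - pP f x u p q r + 6 * f x u p q r * I3 f x u p q r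
    + I0 f x u p q r * (-3 * I1 f x u p q r - (1 / 2) * I2 f x u p q r)

/-- On the branch `I₄ = 0`: `I₉ = −(6/5)(I₃)_q`. -/
def I9z (f : Jet5) : Jet5 := fun x u p q r => -(6 / 5) * pQ (I3 f) x u p q r

lemma deriv_div_add_div_sq {g : ℝ → ℝ} (a b : ℝ) {p : ℝ} (hp : p ≠ 0)
    (hg : ∀ t, g t = a / t + b / t ^ 2) : deriv g p = -(a / p ^ 2) - 2 * b / p ^ 3 := by
  have h2 : HasDerivAt (fun t => t ^ 2) (2 * p) p := by simpa using hasDerivAt_pow 2 p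
  have h : HasDerivAt (fun t => a * t⁻¹ + b * (t ^ 2)⁻¹)
      (a * -(p ^ 2)⁻¹ + b * (-(2 * p) / (p ^ 2) ^ 2)) p :=
    ((hasDerivAt_inv hp).const_mul a).add ((h2.inv (pow_ne_zero 2 hp)).const_mul b)
  simp only [funext hg, div_eq_mul_inv, h.deriv]
  field_simp
  ring

lemma deriv_cubic {g : ℝ → ℝ} (a b c d : ℝ) {x : ℝ}
    (hg : ∀ t, g t = a + b * t + c * t ^ 2 + d * t ^ 3) :
    deriv g x = b + 2 * c * x + 3 * d * x ^ 2 := by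
  have h : HasDerivAt (fun t => a + b * t + c * t ^ 2 + d * t ^ 3)
      (b * 1 + c * (↑2 * x ^ (2 - 1)) + d * (↑3 * x ^ (3 - 1))) x :=
    ((((hasDerivAt_id x).const_mul b).const_add a).add ((hasDerivAt_pow 2 x).const_mul c)).add
      ((hasDerivAt_pow 3 x).const_mul d)
  rw [funext hg, h.deriv]
  norm_num
  ring

-- Required on all of `p ≠ 0`, an open set, so that it also determines `F_p`.
def FactorsThroughPQR (F : Jet5) (G : ℝ → ℝ → ℝ → ℝ) : Prop :=
  ∀ x u p q r, p ≠ 0 → F x u p q r = G p q r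

namespace FactorsThroughPQR

variable {F : Jet5} {G : ℝ → ℝ → ℝ → ℝ} {x u p q r : ℝ}

lemma pX_eq_zero (h : FactorsThroughPQR F G) (hp : p ≠ 0) : pX F x u p q r = 0 := by
  rw [pX, funext fun t => h t u p q r hp, deriv_const]

lemma pU_eq_zero (h : FactorsThroughPQR F G) (hp : p ≠ 0) : pU F x u p q r = 0 := by
  rw [pU, funext fun t => h x t p q r hp, deriv_const]

lemma pP_eq (h : FactorsThroughPQR F G) (hp : p ≠ 0) :
    pP F x u p q r = deriv (fun t => G t q r) p := by
  refine Filter.EventuallyEq.deriv_eq ?_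
  filter_upwards [eventually_ne_nhds hp] with t ht using h x u t q r ht

lemma pQ_eq (h : FactorsThroughPQR F G) (hp : p ≠ 0) :
    pQ F x u p q r = deriv (fun t => G p t r) q := by
  rw [pQ, funext fun t => h x u p t r hp]

lemma pR_eq (h : FactorsThroughPQR F G) (hp : p ≠ 0) :
    pR F x u p q r = deriv (fun t => G p q t) r := by
  rw [pR, funext fun t => h x u p q t hp]

lemma Dhat_eq (f : Jet5) (h : FactorsThroughPQR F G) (hp : p ≠ 0) :
    Dhat f F x u p q r = q * deriv (fun t => G t q r) p + r * deriv (fun t => G p t r) q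
      + f x u p q r * deriv (fun t => G p q t) r := by
  rw [Dhat, h.pX_eq_zero hp, h.pU_eq_zero hp, h.pP_eq hp, h.pQ_eq hp, h.pR_eq hp]
  ring

end FactorsThroughPQR

def canonicalRhs : Jet5 := fun _ _ p q r => 6 * q * r / p - 6 * q ^ 3 / p ^ 2

lemma factorsThroughPQR_canonicalRhs :
    FactorsThroughPQR canonicalRhs (fun p q r => 6 * q * r / p - 6 * q ^ 3 / p ^ 2) :=
  fun _ _ _ _ _ _ => rfl

lemma factorsThroughPQR_I0_canonicalRhs :
    FactorsThroughPQR (I0 canonicalRhs) (fun p q _ => -6 * q / p) := by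
  intro x u p q r hp
  rw [I0, factorsThroughPQR_canonicalRhs.pR_eq hp,
    deriv_cubic (-6 * q ^ 3 / p ^ 2) (6 * q / p) 0 0 fun t => by ring]
  ring

section

variable {x u p q r : ℝ}

lemma Dhat_I0_canonicalRhs (hp : p ≠ 0) :
    Dhat canonicalRhs (I0 canonicalRhs) x u p q r = 6 * q ^ 2 / p ^ 2 - 6 * r / p := by
  rw [factorsThroughPQR_I0_canonicalRhs.Dhat_eq _ hp,
    deriv_div_add_div_sq (-6 * q) 0 hp fun t => by ring,
    deriv_cubic 0 (-6 / p) 0 0 fun t => by ring, deriv_const]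
  field_simp
  ring

lemma factorsThroughPQR_I1_canonicalRhs :
    FactorsThroughPQR (I1 canonicalRhs) (fun p q r => 8 * q ^ 2 / p ^ 2 + r / p) := by
  intro x u p q r hp
  rw [I1, factorsThroughPQR_I0_canonicalRhs x u p q r hp, Dhat_I0_canonicalRhs hp]
  field_simp
  ring

lemma factorsThroughPQR_I2_canonicalRhs :
    FactorsThroughPQR (I2 canonicalRhs) (fun p q r => 15 * q ^ 2 / p ^ 2 - 3 * r / p) := by
  intro x u p q r hp
  rw [I2, Dhat_I0_canonicalRhs hp, factorsThroughPQR_canonicalRhs.pQ_eq hp,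
    deriv_cubic 0 (6 * r / p) 0 (-6 / p ^ 2) fun t => by ring]
  field_simp
  ring

lemma factorsThroughPQR_I3_canonicalRhs :
    FactorsThroughPQR (I3 canonicalRhs) (fun p _ _ => 1 / (2 * p)) := by
  intro x u p q r hp
  rw [I3, factorsThroughPQR_I0_canonicalRhs.pR_eq hp, factorsThroughPQR_I1_canonicalRhs.pR_eq hp,
    factorsThroughPQR_I2_canonicalRhs.pR_eq hp, deriv_const,
    deriv_cubic (8 * q ^ 2 / p ^ 2) (1 / p) 0 0 fun t => by ring,
    deriv_cubic (15 * q ^ 2 / p ^ 2) (-3 / p) 0 0 fun t => by ring]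
  field_simp
  ring

lemma I4_canonicalRhs_eq_zero (hp : p ≠ 0) : I4 canonicalRhs x u p q r = 0 := by
  rw [I4, factorsThroughPQR_I0_canonicalRhs.pR_eq hp, deriv_const, mul_zero]

lemma I5z_canonicalRhs_eq_zero (hp : p ≠ 0) : I5z canonicalRhs x u p q r = 0 := by
  have h : FactorsThroughPQR
      (fun x u p q r => I2 canonicalRhs x u p q r - 3 * I1 canonicalRhs x u p q r)
      (fun p q r => 15 * q ^ 2 / p ^ 2 - 3 * r / p - 3 * (8 * q ^ 2 / p ^ 2 + r / p)) :=
    fun x u p q r hp => by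
      beta_reduce
      rw [factorsThroughPQR_I2_canonicalRhs x u p q r hp,
        factorsThroughPQR_I1_canonicalRhs x u p q r hp]
  rw [I5z, factorsThroughPQR_I0_canonicalRhs x u p q r hp,
    factorsThroughPQR_I3_canonicalRhs x u p q r hp, factorsThroughPQR_I0_canonicalRhs.pP_eq hp,
    h.pQ_eq hp, deriv_div_add_div_sq (-6 * q) 0 hp fun t => by ring,
    deriv_cubic (-6 * r / p) 0 (-9 / p ^ 2) 0 fun t => by ring]
  field_simp
  ring

lemma I6z_canonicalRhs_eq (hp : p ≠ 0) : I6z canonicalRhs x u p q r = 6 / (25 * p ^ 2) := by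
  rw [I6z, factorsThroughPQR_I0_canonicalRhs x u p q r hp,
    factorsThroughPQR_I3_canonicalRhs x u p q r hp, factorsThroughPQR_I3_canonicalRhs.pQ_eq hp,
    factorsThroughPQR_I3_canonicalRhs.pP_eq hp, deriv_const,
    deriv_div_add_div_sq (1 / 2) 0 hp fun t => by ring]
  field_simp
  ring

lemma I8z_canonicalRhs_eq_zero (hp : p ≠ 0) : I8z canonicalRhs x u p q r = 0 := by
  have hfp : pP canonicalRhs x u p q r = -(6 * q * r / p ^ 2) + 12 * q ^ 3 / p ^ 3 := by
    rw [factorsThroughPQR_canonicalRhs.pP_eq hp,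
      deriv_div_add_div_sq (6 * q * r) (-6 * q ^ 3) hp fun t => by ring]
    ring
  have hI2r : pR (I2 canonicalRhs) x u p q r = -3 / p := by
    rw [factorsThroughPQR_I2_canonicalRhs.pR_eq hp,
      deriv_cubic (15 * q ^ 2 / p ^ 2) (-3 / p) 0 0 fun t => by ring]
    ring
  have hDI2 : Dhat canonicalRhs (I2 canonicalRhs) x u p q r
      = q * (3 * r / p ^ 2 - 30 * q ^ 2 / p ^ 3) + r * (30 * q / p ^ 2)
        + canonicalRhs x u p q r * (-3 / p) := by
    rw [factorsThroughPQR_I2_canonicalRhs.Dhat_eq _ hp,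
      deriv_div_add_div_sq (-3 * r) (15 * q ^ 2) hp fun t => by ring,
      deriv_cubic (-3 * r / p) 0 (15 / p ^ 2) 0 fun t => by ring,
      deriv_cubic (15 * q ^ 2 / p ^ 2) (-3 / p) 0 0 fun t => by ring]
    ring
  rw [I8z, hDI2, hI2r, hfp, factorsThroughPQR_I0_canonicalRhs x u p q r hp,
    factorsThroughPQR_I1_canonicalRhs x u p q r hp, factorsThroughPQR_I2_canonicalRhs x u p q r hp,
    factorsThroughPQR_I3_canonicalRhs x u p q r hp, canonicalRhs]
  field_simp
  ring

lemma I9z_canonicalRhs_eq_zero (hp : p ≠ 0) : I9z canonicalRhs x u p q r = 0 := by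
  rw [I9z, factorsThroughPQR_I3_canonicalRhs.pQ_eq hp, deriv_const, mul_zero]

end

/-- for `f = 6qr/p − 6q³/p²`, at every point with `p ≠ 0`:
`I₀ = −6q/p`, `I₃ = 1/(2p)`, `I₄ = 0`, and with the `I₄ = 0` branch formulas
`I₅ = 0`, `I₆ = 6/(25p²) ≠ 0`, `I₈ = 0`, `I₉ = 0`. -/
theorem stmt_17 (f : Jet5)
    (hf : f = fun _ _ p q r => 6 * q * r / p - 6 * q ^ 3 / p ^ 2) :
    ∀ x u p q r : ℝ, p ≠ 0 →
      I0 f x u p q r = -6 * q / p ∧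
      I3 f x u p q r = 1 / (2 * p) ∧
      I4 f x u p q r = 0 ∧
      I5z f x u p q r = 0 ∧
      I6z f x u p q r = 6 / (25 * p ^ 2) ∧
      I6z f x u p q r ≠ 0 ∧
      I8z f x u p q r = 0 ∧
      I9z f x u p q r = 0 := by
  subst hf
  intro x u p q r hp
  have hI6z : I6z canonicalRhs x u p q r = 6 / (25 * p ^ 2) := I6z_canonicalRhs_eq hp
  exact ⟨factorsThroughPQR_I0_canonicalRhs x u p q r hp,
    factorsThroughPQR_I3_canonicalRhs x u p q r hp, I4_canonicalRhs_eq_zero hp,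
    I5z_canonicalRhs_eq_zero hp, hI6z, hI6z ▸ by positivity, I8z_canonicalRhs_eq_zero hp,
    I9z_canonicalRhs_eq_zero hp⟩
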